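/- Let λ₁ > 0, λ₂ > 0, α > 0 and θ ∈ [-1, 1], and for z, y > 0 let f_{Z,Y}(z,y) = λ₁λ₂ z e^{-(λ₁+λ₂y)z}(1 + θ(1 - 2e^{-λ₁z})(1 - 2e^{-λ₂yz})). Then for every x > 0, ∫₀^x ∫₀^α f_{Z,Y}(z,y) dy dz = λ₁{(1+θ)[(1-e^{-λ₁x})/λ₁ - (1-e^{-(λ₁+λ₂α)x})/(λ₁+λ₂α)] - θ[(1-e^{-λ₁x})/λ₁ - (1-e^{-(λ₁+2λ₂α)x})/(λ₁+2λ₂α)] - 2θ[(1-e^{-2λ₁x})/(2λ₁) - (1-e^{-(2λ₁+λ₂α)x})/(2λ₁+λ₂α)] + 2θ[(1-e^{-2λ₁x})/(2λ₁) - (1-e^{-2(λ₁+λ₂α)x})/(2(λ₁+λ₂α))]}. -/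

import Mathlib

/-!
With `a = e^{-λ₁z}` and `E = e^{-λ₂yz}`, the density in `y` is the derivative of
`-λ₁ a E (1 + θ (1 - 2a) (1 - E))`, so the inner integral is
`λ₁ a (1 - b) (1 - θ (1 - 2a) b)` with `b = e^{-λ₂αz}`. Expanded, this is a combination of six
exponentials `e^{-cz}`, each of which integrates over `[0, x]` to `(1 - e^{-cx}) / c`.
-/

open MeasureTheory Real

noncomputable def gwedJointDensity (l₁ l₂ θ z y : ℝ) : ℝ :=
  l₁ * l₂ * z * exp (-(l₁ + l₂ * y) * z)
    * (1 + θ * (1 - 2 * exp (-l₁ * z)) * (1 - 2 * exp (-l₂ * y * z)))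

lemma hasDerivAt_one_sub_exp_neg_mul_div {c : ℝ} (hc : c ≠ 0) (t : ℝ) :
    HasDerivAt (fun t => (1 - exp (-c * t)) / c) (exp (-c * t)) t :=
  (((hasDerivAt_id' t).const_mul (-c)).exp.const_sub 1).div_const c |>.congr_deriv
    (by field_simp)

lemma integral_gwedJointDensity_snd (l₁ l₂ θ z α : ℝ) :
    ∫ y in (0 : ℝ)..α, gwedJointDensity l₁ l₂ θ z y
      = l₁ * exp (-l₁ * z) * (1 - exp (-l₂ * α * z))
          * (1 - θ * (1 - 2 * exp (-l₁ * z)) * exp (-l₂ * α * z)) := by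
  set a := exp (-l₁ * z)
  let E : ℝ → ℝ := fun y => exp (-l₂ * y * z)
  have hE (y : ℝ) : HasDerivAt E (E y * (-l₂ * z)) y :=
    (((hasDerivAt_id' y).const_mul (-l₂)).mul_const z).exp.congr_deriv (by simp [E])
  have hF (y : ℝ) :
      HasDerivAt (fun y => -l₁ * a * (E y + θ * (1 - 2 * a) * (E y - E y * E y)))
        (gwedJointDensity l₁ l₂ θ z y) y := by
    refine (((hE y).fun_add (((hE y).fun_sub ((hE y).fun_mul (hE y))).const_mul
      (θ * (1 - 2 * a)))).const_mul (-l₁ * a)).congr_deriv ?_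
    simp only [gwedJointDensity, a, E, neg_mul, add_mul, neg_add, exp_add]
    ring
  rw [intervalIntegral.integral_eq_sub_of_hasDerivAt (fun y _ => hF y)
    ((by unfold gwedJointDensity; fun_prop : Continuous _).intervalIntegrable _ _)]
  simp only [E, mul_zero, zero_mul, exp_zero]
  ring

lemma integral_integral_gwedJointDensity {l₁ l₂ α : ℝ} (hl₁ : 0 < l₁) (hl₂ : 0 < l₂)
    (hα : 0 < α) (θ x : ℝ) :
    ∫ z in (0 : ℝ)..x, ∫ y in (0 : ℝ)..α, gwedJointDensity l₁ l₂ θ z y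
      = l₁ * ((1 + θ) * ((1 - exp (-l₁ * x)) / l₁
            - (1 - exp (-(l₁ + l₂ * α) * x)) / (l₁ + l₂ * α))
          - θ * ((1 - exp (-l₁ * x)) / l₁
            - (1 - exp (-(l₁ + 2 * l₂ * α) * x)) / (l₁ + 2 * l₂ * α))
          - 2 * θ * ((1 - exp (-2 * l₁ * x)) / (2 * l₁)
            - (1 - exp (-(2 * l₁ + l₂ * α) * x)) / (2 * l₁ + l₂ * α))
          + 2 * θ * ((1 - exp (-2 * l₁ * x)) / (2 * l₁)
            - (1 - exp (-2 * (l₁ + l₂ * α) * x)) / (2 * (l₁ + l₂ * α)))) := by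
  simp only [integral_gwedJointDensity_snd]
  rw [show -2 * l₁ = -(2 * l₁) by ring, show -2 * (l₁ + l₂ * α) = -(2 * (l₁ + l₂ * α)) by ring]
  have hP {c : ℝ} (hc : 0 < c) := hasDerivAt_one_sub_exp_neg_mul_div hc.ne'
  have hG (t : ℝ) :=
    (((((hP hl₁ t).fun_sub (hP (by positivity : 0 < l₁ + l₂ * α) t)).const_mul (1 + θ)).fun_sub
      (((hP hl₁ t).fun_sub (hP (by positivity : 0 < l₁ + 2 * l₂ * α) t)).const_mul θ)).fun_sub
      (((hP (by positivity : 0 < 2 * l₁) t).fun_sub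
        (hP (by positivity : 0 < 2 * l₁ + l₂ * α) t)).const_mul (2 * θ)) |>.fun_add
      (((hP (by positivity : 0 < 2 * l₁) t).fun_sub
        (hP (by positivity : 0 < 2 * (l₁ + l₂ * α)) t)).const_mul (2 * θ))).const_mul l₁
  rw [intervalIntegral.integral_eq_sub_of_hasDerivAt (fun t _ => (hG t).congr_deriv ?_)
    ((by fun_prop : Continuous _).intervalIntegrable _ _)]
  · simp only [mul_zero, exp_zero, sub_self, zero_div]
    ring
  · simp only [neg_mul, two_mul, add_mul, neg_add, exp_add]
    ring

theorem gwed_hidden_truncation_double_integral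
    (l₁ l₂ α θ : ℝ) (hl₁ : 0 < l₁) (hl₂ : 0 < l₂) (hα : 0 < α)
    (f : ℝ → ℝ → ℝ)
    (hf : ∀ z y : ℝ, 0 < z → 0 < y →
      f z y = l₁ * l₂ * z * Real.exp (-(l₁ + l₂ * y) * z)
        * (1 + θ * (1 - 2 * Real.exp (-l₁ * z)) * (1 - 2 * Real.exp (-l₂ * y * z)))) :
    ∀ x : ℝ, 0 < x →
      (∫ z in (0 : ℝ)..x, ∫ y in (0 : ℝ)..α, f z y)
        = l₁ * ((1 + θ) * ((1 - Real.exp (-l₁ * x)) / l₁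
              - (1 - Real.exp (-(l₁ + l₂ * α) * x)) / (l₁ + l₂ * α))
            - θ * ((1 - Real.exp (-l₁ * x)) / l₁
              - (1 - Real.exp (-(l₁ + 2 * l₂ * α) * x)) / (l₁ + 2 * l₂ * α))
            - 2 * θ * ((1 - Real.exp (-2 * l₁ * x)) / (2 * l₁)
              - (1 - Real.exp (-(2 * l₁ + l₂ * α) * x)) / (2 * l₁ + l₂ * α))
            + 2 * θ * ((1 - Real.exp (-2 * l₁ * x)) / (2 * l₁)
              - (1 - Real.exp (-2 * (l₁ + l₂ * α) * x)) / (2 * (l₁ + l₂ * α)))) := by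
  intro x hx
  rw [← integral_integral_gwedJointDensity hl₁ hl₂ hα θ x]
  refine intervalIntegral.integral_congr_Ioo_of_le hx.le fun z hz => ?_
  exact intervalIntegral.integral_congr_Ioo_of_le hα.le fun y hy => hf z y hz.1 hy.1
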